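/- In the setting of the two preceding one-dimensional lemmas, with φ*(1) normalized so that ∑_{y=1}^L φ*(y) = L, one has φ*(1) δ_1 ψ₀(1) ≤ 1/(8L). -/

import Mathlib

/-!
Both factors have closed forms. The equation for `φ` says that the flux
`δ_{x+1} φ(x+1) - δ̄_x φ(x)` is constant, and the boundary condition at `0` makes it vanish, so
`φ(1) δ_1 = L ∏ δ_j / ∑_r A_r` with `A_r = ∏_{j<r} δ̄_j ∏_{j>r} δ_j`. The equation for `ψ` is a
first-order recurrence for its increments, and the boundary conditions make the increments
`ψ(r+1) - ψ(r-1)` sum to `1`, so `2ψ(1) = ∏ δ̄_j / ∑_r B_r` with `B_r` the same product with `δ` and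
`δ̄` swapped. Since `A_r B_r δ_r δ̄_r = ∏ δ_j δ̄_j` and `δ_r δ̄_r ≤ 1/4`, Cauchy–Schwarz gives
`(∑ A_r)(∑ B_r) ≥ (∑ √(A_r B_r))² ≥ 4 L² ∏ δ_j δ̄_j`, hence `φ(1) δ_1 · 2ψ(1) ≤ 1/(4L)`.
-/

open Finset

theorem Finset.card_sq_mul_le_sum_mul_sum {ι : Type*} (s : Finset ι) {f g : ι → ℝ} {c : ℝ}
    (hf : ∀ i ∈ s, 0 ≤ f i) (hg : ∀ i ∈ s, 0 ≤ g i) (hc : 0 ≤ c)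
    (hfg : ∀ i ∈ s, c ≤ f i * g i) :
    (#s : ℝ) ^ 2 * c ≤ (∑ i ∈ s, f i) * ∑ i ∈ s, g i := by
  have hcs := sum_mul_sq_le_sq_mul_sq s (fun i => √(f i)) (fun i => √(g i))
  rw [sum_congr rfl fun i hi => Real.sq_sqrt (hf i hi),
    sum_congr rfl fun i hi => Real.sq_sqrt (hg i hi)] at hcs
  have hterm : ∀ i ∈ s, √c ≤ √(f i) * √(g i) := fun i hi => by
    rw [← Real.sqrt_mul (hf i hi)]
    exact Real.sqrt_le_sqrt (hfg i hi)
  have hsum : #s * √c ≤ ∑ i ∈ s, √(f i) * √(g i) := by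
    simpa [nsmul_eq_mul] using card_nsmul_le_sum s _ _ hterm
  calc (#s : ℝ) ^ 2 * c = (#s * √c) ^ 2 := by rw [mul_pow, Real.sq_sqrt hc]
    _ ≤ (∑ i ∈ s, √(f i) * √(g i)) ^ 2 := pow_le_pow_left₀ (by positivity) hsum 2
    _ ≤ _ := hcs

section CommMonoid

variable {M : Type*} [CommMonoid M]

theorem mul_prod_range_eq_of_mul_succ {u a c : ℕ → M} {r : ℕ}
    (h : ∀ k < r, c k * u (k + 1) = a k * u k) :
    u r * ∏ k ∈ range r, c k = u 0 * ∏ k ∈ range r, a k := by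
  induction r with
  | zero => simp
  | succ r ih =>
    rw [prod_range_succ, prod_range_succ]
    calc u (r + 1) * ((∏ k ∈ range r, c k) * c r)
        = c r * u (r + 1) * ∏ k ∈ range r, c k := by ac_rfl
      _ = a r * (u r * ∏ k ∈ range r, c k) := by rw [h r r.lt_succ_self, mul_assoc]
      _ = u 0 * ((∏ k ∈ range r, a k) * a r) := by
        rw [ih fun k hk => h k (by omega)]; ac_rfl

/-- `∏_{j<r} a_j ∏_{r<j<n} c_j`: the `r`-th summand of the denominators in the closed formulas
for `φ*(1) δ_1` and `2ψ₀(1)`, with all indices shifted down by one. -/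
def mixedProd (a c : ℕ → M) (n r : ℕ) : M :=
  (∏ k ∈ range r, a k) * ∏ k ∈ Ico (r + 1) n, c k

theorem prod_range_eq_mul_mixedProd (a : ℕ → M) {n r : ℕ} (hr : r < n) :
    ∏ k ∈ range n, a k = a r * mixedProd a a n r := by
  rw [mixedProd, ← prod_range_mul_prod_Ico a hr.le, prod_eq_prod_Ico_succ_bot hr,
    mul_left_comm]

theorem mixedProd_mul_mixedProd (a c : ℕ → M) (n r : ℕ) :
    mixedProd a c n r * mixedProd c a n r =
      mixedProd (fun k => a k * c k) (fun k => a k * c k) n r := by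
  simp only [mixedProd, prod_mul_distrib]
  ac_rfl

end CommMonoid

section CommRing

variable {R : Type*} [CommRing R] {δ δ' : ℕ → R} {n r : ℕ}

theorem mul_prod_range_eq_mixedProd {u : ℕ → R}
    (hu : ∀ k, k + 1 < n → δ (k + 1) * u (k + 1) = δ' k * u k) (hr : r < n) :
    u r * ∏ k ∈ range n, δ k = u 0 * δ 0 * mixedProd δ' δ n r := by
  have hclosed := mul_prod_range_eq_of_mul_succ (c := fun k => δ (k + 1)) (a := δ') (u := u)
    (r := r) fun k hk => hu k (by omega)
  rw [← prod_range_mul_prod_Ico δ (Nat.succ_le_of_lt hr), prod_range_succ', mixedProd]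
  linear_combination (δ 0 * ∏ k ∈ Ico (r + 1) n, δ k) * hclosed

theorem add_mul_prod_range_eq_mixedProd {Δ : ℕ → R}
    (hΔ : ∀ k < n, δ' k * Δ (k + 1) = δ k * Δ k) (hδ : δ r + δ' r = 1) (hr : r < n) :
    (Δ r + Δ (r + 1)) * ∏ k ∈ range n, δ' k = Δ 0 * mixedProd δ δ' n r := by
  have h₀ := mul_prod_range_eq_of_mul_succ (c := δ') (a := δ) (u := Δ) (r := r)
    fun k hk => hΔ k (by omega)
  have h₁ := mul_prod_range_eq_of_mul_succ (c := δ') (a := δ) (u := Δ) (r := r + 1)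
    fun k hk => hΔ k (by omega)
  rw [prod_range_succ, prod_range_succ] at h₁
  rw [← prod_range_mul_prod_Ico δ' (Nat.succ_le_of_lt hr), prod_range_succ, mixedProd]
  linear_combination (∏ k ∈ Ico (r + 1) n, δ' k) * (δ' r * h₀ + h₁
    + Δ 0 * (∏ k ∈ range r, δ k) * hδ)

end CommRing

theorem mixedProd_pos {a c : ℕ → ℝ} {n r : ℕ} (ha : ∀ k < n, 0 < a k) (hc : ∀ k < n, 0 < c k)
    (hr : r < n) : 0 < mixedProd a c n r :=
  mul_pos (prod_pos fun k hk => ha k ((mem_range.1 hk).trans hr))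
    (prod_pos fun k hk => hc k (mem_Ico.1 hk).2)

theorem four_mul_sq_mul_prod_le_sum_mixedProd_mul_sum_mixedProd {δ δ' : ℕ → ℝ} {n : ℕ}
    (hδ : ∀ k < n, 0 < δ k) (hδ' : ∀ k < n, 0 < δ' k) (hδδ' : ∀ k < n, δ k * δ' k ≤ 1 / 4) :
    4 * n ^ 2 * ∏ k ∈ range n, (δ k * δ' k)
      ≤ (∑ r ∈ range n, mixedProd δ' δ n r) * ∑ r ∈ range n, mixedProd δ δ' n r := by
  have hP : 0 ≤ ∏ k ∈ range n, (δ k * δ' k) :=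
    prod_nonneg fun k hk => (mul_pos (hδ k (mem_range.1 hk)) (hδ' k (mem_range.1 hk))).le
  have key := card_sq_mul_le_sum_mul_sum (range n) (c := 4 * ∏ k ∈ range n, (δ k * δ' k))
    (f := fun r => mixedProd δ' δ n r) (g := fun r => mixedProd δ δ' n r)
    (fun r hr => (mixedProd_pos hδ' hδ (mem_range.1 hr)).le)
    (fun r hr => (mixedProd_pos hδ hδ' (mem_range.1 hr)).le) (by positivity) fun r hr => by
      have hr := mem_range.1 hr
      have hsplit := prod_range_eq_mul_mixedProd (fun k => δ k * δ' k) hr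
      rw [← mixedProd_mul_mixedProd] at hsplit
      have hm := mul_pos (mixedProd_pos hδ' hδ hr) (mixedProd_pos hδ hδ' hr)
      nlinarith [hδδ' r hr]
  rw [card_range] at key
  linarith

theorem mul_mul_le_one_div_four_mul_of_recurrences {n : ℕ} (hn : 0 < n) {δ δ' u Δ : ℕ → ℝ}
    (hδ : ∀ k < n, 0 < δ k) (hδ' : ∀ k < n, 0 < δ' k) (hδδ' : ∀ k < n, δ k + δ' k = 1)
    (hu : ∀ k, k + 1 < n → δ (k + 1) * u (k + 1) = δ' k * u k)
    (hu_sum : ∑ r ∈ range n, u r = n)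
    (hΔ : ∀ k < n, δ' k * Δ (k + 1) = δ k * Δ k)
    (hΔ_sum : ∑ r ∈ range n, (Δ r + Δ (r + 1)) = 1) :
    u 0 * δ 0 * Δ 0 ≤ 1 / (4 * n) := by
  set A := ∑ r ∈ range n, mixedProd δ' δ n r
  set B := ∑ r ∈ range n, mixedProd δ δ' n r
  have hA : n * ∏ k ∈ range n, δ k = u 0 * δ 0 * A := by
    rw [← hu_sum, sum_mul, mul_sum]
    exact sum_congr rfl fun r hr => mul_prod_range_eq_mixedProd hu (mem_range.1 hr)
  have hB : ∏ k ∈ range n, δ' k = Δ 0 * B := by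
    rw [← one_mul (∏ k ∈ range n, δ' k), ← hΔ_sum, sum_mul, mul_sum]
    exact sum_congr rfl fun r hr =>
      add_mul_prod_range_eq_mixedProd hΔ (hδδ' r (mem_range.1 hr)) (mem_range.1 hr)
  have hP : 0 < ∏ k ∈ range n, (δ k * δ' k) :=
    prod_pos fun k hk => mul_pos (hδ k (mem_range.1 hk)) (hδ' k (mem_range.1 hk))
  have hCS := four_mul_sq_mul_prod_le_sum_mixedProd_mul_sum_mixedProd hδ hδ' fun k hk => by
    nlinarith [hδδ' k hk, sq_nonneg (δ k - δ' k)]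
  have hn_pos : (0 : ℝ) < n := Nat.cast_pos.2 hn
  have hAB : 0 < A * B := lt_of_lt_of_le (by positivity) hCS
  have key : u 0 * δ 0 * Δ 0 * (A * B) = n * ∏ k ∈ range n, (δ k * δ' k) := by
    rw [prod_mul_distrib]
    linear_combination -(∏ k ∈ range n, δ' k) * hA - u 0 * δ 0 * A * hB
  rw [le_div_iff₀ (by positivity), ← mul_le_mul_iff_of_pos_right hAB]
  nlinarith

theorem stmt_4_general (L : ℕ) (hL : 1 ≤ L) (b : ℕ → ℝ)
    (hb : ∀ j, j ≤ L + 1 → |b j| < 1/2)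
    (hb1 : b 1 = - b 0)
    (φ ψ : ℕ → ℝ)
    (hφeq : ∀ x, 1 ≤ x → x ≤ L →
      φ x - (1/2) * (φ (x+1) + φ (x-1)) - b (x-1) * φ (x-1) + b (x+1) * φ (x+1) = 0)
    (hφbc0 : φ 0 = φ 1)
    (hφnorm : ∑ y ∈ Icc 1 L, φ y = L)
    (hψeq : ∀ x, 1 ≤ x → x ≤ L →
      ψ x - (1/2) * (ψ (x+1) + ψ (x-1)) - b x * (ψ (x+1) - ψ (x-1)) = 0)
    (hψbc0 : ψ 0 = - ψ 1) (hψbcL : ψ (L+1) = 1 - ψ L) :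
    φ 1 * (1/2 - b 1) * ψ 1 ≤ 1 / (8 * L) := by
  have hφstep : ∀ x < L, (1/2 - b (x + 1)) * φ (x + 1) = (1/2 + b x) * φ x := by
    intro x hx
    induction x with
    | zero => rw [hφbc0, hb1]; ring
    | succ x ih =>
      have h := hφeq (x + 1) (by omega) (by omega)
      simp only [Nat.add_sub_cancel] at h
      linear_combination ih (by omega) - h
  have hψstep : ∀ k < L, (1/2 + b (k + 1)) * (ψ (k + 2) - ψ (k + 1))
      = (1/2 - b (k + 1)) * (ψ (k + 1) - ψ k) := fun k hk => by
    have h := hψeq (k + 1) (by omega) (by omega)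
    simp only [Nat.add_sub_cancel] at h
    linear_combination -h
  have hφsum : ∑ r ∈ range L, φ (r + 1) = L := by
    rw [← hφnorm, range_eq_Ico, sum_Ico_add', zero_add, Ico_add_one_right_eq_Icc]
  have hψsum : ∑ r ∈ range L, (ψ (r + 1) - ψ r + (ψ (r + 2) - ψ (r + 1))) = 1 := by
    rw [sum_add_distrib, sum_range_sub ψ, sum_range_sub (fun i => ψ (i + 1)), hψbcL, hψbc0]
    ring
  have hbound := mul_mul_le_one_div_four_mul_of_recurrences hL (δ := fun k => 1/2 - b (k + 1))
    (δ' := fun k => 1/2 + b (k + 1)) (u := fun k => φ (k + 1)) (Δ := fun k => ψ (k + 1) - ψ k)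
    (fun k hk => by linarith [(abs_lt.1 (hb (k + 1) (by omega))).2])
    (fun k hk => by linarith [(abs_lt.1 (hb (k + 1) (by omega))).1])
    (fun k _ => by ring) (fun k hk => hφstep (k + 1) hk) hφsum hψstep hψsum
  simp only [zero_add, hψbc0] at hbound
  calc φ 1 * (1/2 - b 1) * ψ 1 = φ 1 * (1/2 - b 1) * (ψ 1 - -ψ 1) / 2 := by ring
    _ ≤ 1 / (4 * L) / 2 := by gcongr
    _ = 1 / (8 * L) := by ring

theorem stmt_4 (L : ℕ) (hL : 1 ≤ L) (b : ℕ → ℝ)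
    (hb : ∀ j, j ≤ L + 1 → |b j| < 1/2)
    (hb1 : b 1 = - b 0)
    (φ ψ : ℕ → ℝ)
    (hφeq : ∀ x, 1 ≤ x → x ≤ L →
      φ x - (1/2) * (φ (x+1) + φ (x-1)) - b (x-1) * φ (x-1) + b (x+1) * φ (x+1) = 0)
    (hφbc0 : φ 0 = φ 1) (hφbcL : φ (L+1) = φ L)
    (hφnorm : ∑ y ∈ Icc 1 L, φ y = L)
    (hψeq : ∀ x, 1 ≤ x → x ≤ L →
      ψ x - (1/2) * (ψ (x+1) + ψ (x-1)) - b x * (ψ (x+1) - ψ (x-1)) = 0)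
    (hψbc0 : ψ 0 = - ψ 1) (hψbcL : ψ (L+1) = 1 - ψ L) :
    φ 1 * (1/2 - b 1) * ψ 1 ≤ 1 / (8 * L) :=
  stmt_4_general L hL b hb hb1 φ ψ hφeq hφbc0 hφnorm hψeq hψbc0 hψbcL
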